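/- Let ⟨G,M,I⟩ be a formal context, let (A,B) be a concept of ⟨G,M,I⟩, and let FS_{(A,B)} = { α({a}) ∩ B : a ∈ G \ A }. If B', B'' ∈ FS_{(A,B)} satisfy B' ⊊ B'', then B' is not the intent of any immediate successor of (A,B): there is no concept (A₁,B₁) with intent B₁ = B' that is an immediate successor of (A,B) in the concept lattice. -/

import Mathlib

/-- The intent (derivation) of a set of objects: attributes shared by all of them. -/
def intentOf {G M : Type*} (I : G → M → Prop) (A : Set G) : Set M :=
  {m | ∀ a ∈ A, I a m}

/-- The extent (derivation) of a set of attributes: objects possessing all of them. -/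
def extentOf {G M : Type*} (I : G → M → Prop) (B : Set M) : Set G :=
  {g | ∀ b ∈ B, I g b}

/-- A formal concept of the context ⟨G,M,I⟩, given as a pair (extent, intent). -/
def IsConcept {G M : Type*} (I : G → M → Prop) (c : Set G × Set M) : Prop :=
  intentOf I c.1 = c.2 ∧ extentOf I c.2 = c.1

/-- The order on concepts: strict comparison by inclusion of extents. -/
def ConceptLT {G M : Type*} (c d : Set G × Set M) : Prop := c.1 ⊂ d.1

/-- `d` is an immediate successor of `c`: a concept strictly above `c`
with no concept strictly in between. -/
def IsImmSucc {G M : Type*} (I : G → M → Prop) (d c : Set G × Set M) : Prop :=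
  IsConcept I d ∧ ConceptLT c d ∧
    ∀ e, IsConcept I e → ConceptLT c e → ¬ ConceptLT e d

/-- The family FS_{(A,B)} = { α({a}) ∩ B : a ∈ G \ A }. -/
def FS {G M : Type*} (I : G → M → Prop) (A : Set G) (B : Set M) : Set (Set M) :=
  {Y | ∃ a, a ∉ A ∧ Y = intentOf I {a} ∩ B}

/-! If `B'' = α({a}) ∩ B` with `a ∉ A`, the concept generated by `B''` lies strictly between
`(A, B)` and any concept with intent `B' ⊊ B''`: its extent contains `a`, and its intent
contains `B''`. -/

theorem extentOf_anti {G M : Type*} (I : G → M → Prop) {B₁ B₂ : Set M} (h : B₁ ⊆ B₂) :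
    extentOf I B₂ ⊆ extentOf I B₁ :=
  fun _ hg b hb => hg b (h hb)

theorem subset_intentOf_extentOf {G M : Type*} (I : G → M → Prop) (B : Set M) :
    B ⊆ intentOf I (extentOf I B) :=
  fun b hb _ hg => hg b hb

theorem isConcept_extentOf_intentOf {G M : Type*} (I : G → M → Prop) (B : Set M) :
    IsConcept I (extentOf I B, intentOf I (extentOf I B)) :=
  ⟨rfl, (extentOf_anti I (subset_intentOf_extentOf I B)).antisymm
    fun _ hg _ hm => hm _ hg⟩

theorem extentOf_ssubset_of_ssubset_intent {G M : Type*} (I : G → M → Prop)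
    {c : Set G × Set M} (hc : IsConcept I c) {B : Set M} (h : c.2 ⊂ B) :
    extentOf I B ⊂ c.1 := by
  have hsub : extentOf I B ⊆ c.1 := hc.2 ▸ extentOf_anti I h.1
  refine ⟨hsub, fun hsup => h.2 ?_⟩
  calc B ⊆ intentOf I (extentOf I B) := subset_intentOf_extentOf I B
    _ = c.2 := by rw [hsub.antisymm hsup, hc.1]

theorem ssubset_extentOf_of_mem_FS {G M : Type*} (I : G → M → Prop) {A : Set G} {B Y : Set M}
    (hA : A ⊆ extentOf I B) (hY : Y ∈ FS I A B) : A ⊂ extentOf I Y := by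
  obtain ⟨a, haA, rfl⟩ := hY
  exact ⟨hA.trans (extentOf_anti I Set.inter_subset_right),
    fun h => haA (h fun _ hm => hm.1 a rfl)⟩

theorem not_immediate_successor_of_not_maximal_general
    {G M : Type*} (I : G → M → Prop) (A : Set G) (B : Set M)
    (hAB : IsConcept I (A, B))
    (B' B'' : Set M) (hB'' : B'' ∈ FS I A B)
    (hss : B' ⊂ B'') :
    ¬ ∃ c : Set G × Set M, IsConcept I c ∧ c.2 = B' ∧ IsImmSucc I c (A, B) := by
  rintro ⟨c, hc, rfl, -, -, hmax⟩
  exact hmax _ (isConcept_extentOf_intentOf I B'') (ssubset_extentOf_of_mem_FS I hAB.2.ge hB'')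
    (extentOf_ssubset_of_ssubset_intent I hc hss)

theorem not_immediate_successor_of_not_maximal
    {G M : Type*} (I : G → M → Prop) (A : Set G) (B : Set M)
    (hAB : IsConcept I (A, B))
    (B' B'' : Set M) (hB' : B' ∈ FS I A B) (hB'' : B'' ∈ FS I A B)
    (hss : B' ⊂ B'') :
    ¬ ∃ c : Set G × Set M, IsConcept I c ∧ c.2 = B' ∧ IsImmSucc I c (A, B) :=
  not_immediate_successor_of_not_maximal_general I A B hAB B' B'' hB'' hss
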